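/- Under the hypotheses of the saddle-point construction (E X = 0, E X² = 1, E e^{α|X|} ≤ 2), the map z ↦ K'(z) satisfies |K'(z₂) − K'(z₁)| ≥ |z₂ − z₁|/2 for all z₁, z₂ in the disc |z| ≤ α³/16, and in particular |K'(z)| ≥ |z|/2 there. -/

import Mathlib

/-!
Write `M z = E e^{zX}`, so that `K = log M`, `K' = M'/M` and `K'' = (M'' M - M'^2) / M^2`.
Taylor's formula for `M`, `M'`, `M''` at `0`, with the moments `E X = 0` and `E X^2 = 1`, gives
`M z ≈ 1`, `M' z ≈ z` and `M'' z ≈ 1`; the remainders are controlled by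
`E |X|^j e^{α|X|/8} ≤ (8j / (7eα))^j E e^{α|X|}`. Since `E e^{α|X|} ≥ 1 + α^2/2`, also `α^2 ≤ 2`,
and on the disc `|z| ≤ α^3/16` these estimates force `|K'' - 1| ≤ 1/2`. The mean value inequality
for `K' - id` then gives `|K'(z₂) - K'(z₁) - (z₂ - z₁)| ≤ |z₂ - z₁| / 2`.
-/

open MeasureTheory ProbabilityTheory
open scoped ENNReal

theorem Real.pow_le_mul_exp_mul (n : ℕ) {b t : ℝ} (hb : 0 < b) (ht : 0 ≤ t) :
    t ^ n ≤ (n / (Real.exp 1 * b)) ^ n * Real.exp (b * t) := by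
  rcases n.eq_zero_or_pos with rfl | hn
  · simpa using Real.one_le_exp (by positivity)
  have hn : (0 : ℝ) < n := by exact_mod_cast hn
  have key : t ≤ n / (Real.exp 1 * b) * Real.exp (b * t / n) := by
    have h := Real.add_one_le_exp (b * t / n - 1)
    rw [Real.exp_sub, sub_add_cancel, div_le_div_iff₀ hn (Real.exp_pos 1)] at h
    rw [div_mul_eq_mul_div, le_div_iff₀ (by positivity)]
    linarith
  calc t ^ n ≤ (n / (Real.exp 1 * b) * Real.exp (b * t / n)) ^ n := by gcongr
    _ = _ := by rw [mul_pow, ← Real.exp_nat_mul, mul_div_cancel₀ _ hn.ne']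

theorem pow_abs_mul_exp_mul_abs_le (n : ℕ) {c α : ℝ} (hc : c < α) (x : ℝ) :
    |x| ^ n * Real.exp (c * |x|) ≤ (n / (Real.exp 1 * (α - c))) ^ n * Real.exp (α * |x|) := by
  calc |x| ^ n * Real.exp (c * |x|)
      ≤ (n / (Real.exp 1 * (α - c))) ^ n * Real.exp ((α - c) * |x|) * Real.exp (c * |x|) := by
        gcongr; exact Real.pow_le_mul_exp_mul n (sub_pos.2 hc) (abs_nonneg x)
    _ = _ := by rw [mul_assoc, ← Real.exp_add]; ring_nf

-- `189 / 80 = 27 / 10 * (7 / 8)`, and `27 / 10 < e`.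
theorem div_exp_one_mul_le {α : ℝ} (j : ℝ) (hj : 0 ≤ j) (hα : 0 < α) :
    j / (Real.exp 1 * (7 / 8 * α)) ≤ j / (189 / 80 * α) := by
  have he : (27 / 10 : ℝ) ≤ Real.exp 1 := by linarith [Real.exp_one_gt_d9]
  exact div_le_div_of_nonneg_left hj (by positivity) (by nlinarith)

theorem norm_pow_mul_exp_sub_taylor_le (k n : ℕ) {z : ℂ} {c : ℝ} (hz : ‖z‖ ≤ c) (x : ℝ) :
    ‖(x : ℂ) ^ k * (Complex.exp (z * x) - ∑ m ∈ Finset.range n, (z * x) ^ m / m.factorial)‖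
      ≤ ‖z‖ ^ n * (|x| ^ (k + n) * Real.exp (c * |x|)) := by
  have h := Complex.norm_exp_sub_sum_le_norm_mul_exp (z * x) n
  simp only [norm_mul, Complex.norm_real, Real.norm_eq_abs, norm_pow] at h ⊢
  calc |x| ^ k * ‖Complex.exp (z * x) - ∑ m ∈ Finset.range n, (z * x) ^ m / m.factorial‖
      ≤ |x| ^ k * ((‖z‖ * |x|) ^ n * Real.exp (‖z‖ * |x|)) := by gcongr
    _ ≤ |x| ^ k * ((‖z‖ * |x|) ^ n * Real.exp (c * |x|)) := by gcongr
    _ = _ := by ring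

-- With `m, m₁, m₂ = M z, M' z, M'' z`, the left-hand side is `‖K'' z - 1‖`.
theorem Complex.norm_mul_div_sq_sub_one_le {m m₁ m₂ z : ℂ} (hm : ‖m - 1‖ ≤ 1 / 36)
    (hm₁ : ‖m₁ - z‖ ≤ 1 / 16) (hm₂ : ‖m₂ - 1‖ ≤ 3 / 10) (hz : ‖z‖ ≤ 1 / 4) :
    ‖(m₂ * m - m₁ ^ 2) / m ^ 2 - 1‖ ≤ 1 / 2 := by
  have hm_le : ‖m‖ ≤ 37 / 36 := by linarith [norm_le_norm_add_norm_sub' m 1, norm_one (α := ℂ)]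
  have hm_ge : 35 / 36 ≤ ‖m‖ := by
    linarith [norm_sub_norm_le 1 m, norm_sub_rev 1 m, norm_one (α := ℂ)]
  have hnum : ‖m₂ * m - m₁ ^ 2 - m ^ 2‖ ≤ 3 / 10 * (37 / 36) + 37 / 36 * (1 / 36)
      + (1 / 4) ^ 2 + 2 * (1 / 4) * (1 / 16) + (1 / 16) ^ 2 := by
    rw [show m₂ * m - m₁ ^ 2 - m ^ 2
      = (m₂ - 1) * m - m * (m - 1) - z ^ 2 - 2 * z * (m₁ - z) - (m₁ - z) ^ 2 by ring]
    grw [norm_sub_le, norm_sub_le, norm_sub_le, norm_sub_le]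
    simp only [norm_mul, norm_pow, Complex.norm_ofNat]
    gcongr
  have hm0 : m ≠ 0 := norm_pos_iff.1 (by linarith)
  rw [div_sub_one (pow_ne_zero 2 hm0), norm_div, norm_pow, div_le_iff₀ (by positivity)]
  calc _ ≤ _ := hnum
    _ ≤ 1 / 2 * (35 / 36) ^ 2 := by norm_num
    _ ≤ 1 / 2 * ‖m‖ ^ 2 := by gcongr

theorem Convex.mul_norm_sub_le_norm_image_sub {𝕜 : Type*} [RCLike 𝕜] {f f' : 𝕜 → 𝕜}
    {s : Set 𝕜} {x y : 𝕜} {C : ℝ} (hf : ∀ x ∈ s, HasDerivWithinAt f (f' x) s x)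
    (hf' : ∀ x ∈ s, ‖f' x - 1‖ ≤ C) (hs : Convex ℝ s) (hx : x ∈ s) (hy : y ∈ s) :
    (1 - C) * ‖y - x‖ ≤ ‖f y - f x‖ := by
  have h := hs.norm_image_sub_le_of_norm_hasDerivWithin_le
    (f := fun z ↦ f z - z) (fun z hz ↦ (hf z hz).sub (hasDerivWithinAt_id z s)) hf' hx hy
  have htri := norm_sub_norm_le (y - x) (f y - f x)
  rw [show y - x - (f y - f x) = -(f y - y - (f x - x)) by ring, norm_neg] at htri
  linarith

section

variable {Ω : Type*} [MeasurableSpace Ω] {P : Measure Ω} {X : Ω → ℝ} {α : ℝ}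

theorem integrable_exp_mul_abs_of_lintegral_le (hX : Measurable X) {C : ℝ≥0∞} (hC : C ≠ ⊤)
    (hexp : ∫⁻ ω, ENNReal.ofReal (Real.exp (α * |X ω|)) ∂P ≤ C) :
    Integrable (fun ω ↦ Real.exp (α * |X ω|)) P :=
  ⟨by fun_prop, (hasFiniteIntegral_iff_ofReal (ae_of_all _ fun _ ↦ Real.exp_nonneg _)).2
    (hexp.trans_lt hC.lt_top)⟩

theorem integral_exp_mul_abs_le_of_lintegral_le (hX : Measurable X) {C : ℝ≥0∞} (hC : C ≠ ⊤)
    (hexp : ∫⁻ ω, ENNReal.ofReal (Real.exp (α * |X ω|)) ∂P ≤ C) :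
    ∫ ω, Real.exp (α * |X ω|) ∂P ≤ C.toReal := by
  rw [integral_eq_lintegral_of_nonneg_ae (ae_of_all _ fun _ ↦ Real.exp_nonneg _) (by fun_prop)]
  exact ENNReal.toReal_mono hC hexp

theorem sq_mul_integral_sq_le [IsProbabilityMeasure P]
    (hint : Integrable (fun ω ↦ Real.exp (α * |X ω|)) P) (hα : 0 ≤ α) :
    α ^ 2 * ∫ ω, X ω ^ 2 ∂P ≤ 2 * (∫ ω, Real.exp (α * |X ω|) ∂P - 1) := by
  have hpt : ∀ ω, 2⁻¹ * (α ^ 2 * X ω ^ 2) ≤ Real.exp (α * |X ω|) - 1 := fun ω ↦ by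
    have h := Real.quadratic_le_exp_of_nonneg (mul_nonneg hα (abs_nonneg (X ω)))
    rw [mul_pow, sq_abs] at h
    nlinarith [mul_nonneg hα (abs_nonneg (X ω))]
  have h := integral_mono_of_nonneg (g := fun ω ↦ Real.exp (α * |X ω|) - 1)
    (ae_of_all _ fun ω ↦ by positivity) (hint.sub (integrable_const 1)) (ae_of_all _ hpt)
  rw [integral_const_mul, integral_const_mul, integral_sub hint (integrable_const 1)] at h
  simp only [integral_const, probReal_univ, smul_eq_mul, mul_one] at h
  linarith

theorem integrable_pow_abs_mul_exp_mul_abs (hX : AEMeasurable X P)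
    (hint : Integrable (fun ω ↦ Real.exp (α * |X ω|)) P) (n : ℕ) {c : ℝ} (hc : c < α) :
    Integrable (fun ω ↦ |X ω| ^ n * Real.exp (c * |X ω|)) P := by
  refine (hint.const_mul ((n / (Real.exp 1 * (α - c))) ^ n)).mono' (by fun_prop)
    (ae_of_all _ fun ω ↦ ?_)
  rw [Real.norm_of_nonneg (by positivity)]
  exact pow_abs_mul_exp_mul_abs_le n hc (X ω)

theorem integral_pow_abs_mul_exp_mul_abs_le (hX : AEMeasurable X P)
    (hint : Integrable (fun ω ↦ Real.exp (α * |X ω|)) P) (n : ℕ) {c : ℝ} (hc : c < α) :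
    ∫ ω, |X ω| ^ n * Real.exp (c * |X ω|) ∂P
      ≤ (n / (Real.exp 1 * (α - c))) ^ n * ∫ ω, Real.exp (α * |X ω|) ∂P := by
  rw [← integral_const_mul]
  exact integral_mono (integrable_pow_abs_mul_exp_mul_abs hX hint n hc) (hint.const_mul _)
    fun ω ↦ pow_abs_mul_exp_mul_abs_le n hc (X ω)

theorem Ioo_subset_interior_integrableExpSet (hX : AEMeasurable X P)
    (hint : Integrable (fun ω ↦ Real.exp (α * |X ω|)) P) :
    Set.Ioo (-α) α ⊆ interior (integrableExpSet X P) := by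
  rw [← interior_Icc]
  refine interior_mono fun t ht ↦ hint.mono' (by fun_prop) (ae_of_all _ fun ω ↦ ?_)
  rw [Real.norm_of_nonneg (Real.exp_nonneg _), Real.exp_le_exp]
  calc t * X ω ≤ |t| * |X ω| := by rw [← abs_mul]; exact le_abs_self _
    _ ≤ α * |X ω| := by gcongr; exact abs_le.2 ht

theorem re_mem_interior_integrableExpSet (hX : AEMeasurable X P)
    (hint : Integrable (fun ω ↦ Real.exp (α * |X ω|)) P) {z : ℂ} (hz : ‖z‖ < α) :
    z.re ∈ interior (integrableExpSet X P) :=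
  Ioo_subset_interior_integrableExpSet hX hint
    (abs_lt.1 ((Complex.abs_re_le_norm z).trans_lt hz))

theorem zero_mem_interior_integrableExpSet (hX : AEMeasurable X P)
    (hint : Integrable (fun ω ↦ Real.exp (α * |X ω|)) P) (hα : 0 < α) :
    (0 : ℝ) ∈ interior (integrableExpSet X P) :=
  Ioo_subset_interior_integrableExpSet hX hint ⟨neg_lt_zero.2 hα, hα⟩

theorem iteratedDeriv_complexMGF_zero (n : ℕ)
    (h0 : (0 : ℝ) ∈ interior (integrableExpSet X P)) :
    iteratedDeriv n (complexMGF X P) 0 = ∫ ω, X ω ^ n ∂P := by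
  rw [iteratedDeriv_complexMGF (by simpa using h0), ← integral_complex_ofReal]
  simp

theorem norm_iteratedDeriv_complexMGF_sub_taylor_le (hX : AEMeasurable X P)
    (hint : Integrable (fun ω ↦ Real.exp (α * |X ω|)) P) (k n : ℕ) {z : ℂ} {c : ℝ}
    (hz : ‖z‖ ≤ c) (hc : c < α) :
    ‖iteratedDeriv k (complexMGF X P) z
        - ∑ m ∈ Finset.range n, z ^ m / m.factorial * iteratedDeriv (k + m) (complexMGF X P) 0‖
      ≤ ‖z‖ ^ n * (((k + n : ℕ) : ℝ) / (Real.exp 1 * (α - c))) ^ (k + n)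
        * ∫ ω, Real.exp (α * |X ω|) ∂P := by
  have h0 := zero_mem_interior_integrableExpSet hX hint (by linarith [norm_nonneg z])
  have hz' := re_mem_interior_integrableExpSet hX hint (hz.trans_lt hc)
  have hmom : ∀ j, Integrable (fun ω ↦ (X ω : ℂ) ^ j) P := fun j ↦ by
    simpa using (integrable_pow_of_mem_interior_integrableExpSet h0 j).ofReal (𝕜 := ℂ)
  have hrem : ∫ ω, (X ω : ℂ) ^ k
          * (Complex.exp (z * X ω) - ∑ m ∈ Finset.range n, (z * X ω) ^ m / m.factorial) ∂P
      = iteratedDeriv k (complexMGF X P) z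
        - ∑ m ∈ Finset.range n, z ^ m / m.factorial * iteratedDeriv (k + m) (complexMGF X P) 0 := by
    calc _ = ∫ ω, ((X ω : ℂ) ^ k * Complex.exp (z * X ω)
          - ∑ m ∈ Finset.range n, z ^ m / m.factorial * (X ω : ℂ) ^ (k + m)) ∂P := by
          refine integral_congr_ae (ae_of_all _ fun ω ↦ ?_)
          simp only [mul_sub, Finset.mul_sum, mul_pow, pow_add]
          congr 1
          exact Finset.sum_congr rfl fun m _ ↦ by ring
      _ = _ := by
          rw [integral_sub (integrable_pow_mul_cexp_of_re_mem_interior_integrableExpSet hz' k)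
            (integrable_finsetSum _ fun m _ ↦ (hmom _).const_mul _),
            integral_finsetSum _ fun m _ ↦ (hmom _).const_mul _]
          simp_rw [integral_const_mul, iteratedDeriv_complexMGF hz',
            iteratedDeriv_complexMGF_zero _ h0, ← integral_complex_ofReal, Complex.ofReal_pow]
  rw [← hrem]
  calc _ ≤ ∫ ω, ‖z‖ ^ n * (|X ω| ^ (k + n) * Real.exp (c * |X ω|)) ∂P :=
        norm_integral_le_of_norm_le
          ((integrable_pow_abs_mul_exp_mul_abs hX hint _ hc).const_mul _)
          (ae_of_all _ fun ω ↦ norm_pow_mul_exp_sub_taylor_le k n hz (X ω))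
    _ ≤ _ := by
        rw [integral_const_mul, mul_assoc]
        gcongr
        exact integral_pow_abs_mul_exp_mul_abs_le hX hint _ hc

theorem hasDerivAt_iteratedDeriv_complexMGF_succ {z : ℂ}
    (hz : z.re ∈ interior (integrableExpSet X P)) (n : ℕ) :
    HasDerivAt (iteratedDeriv n (complexMGF X P)) (iteratedDeriv (n + 1) (complexMGF X P) z) z := by
  rw [iteratedDeriv_complexMGF hz]
  exact hasDerivAt_iteratedDeriv_complexMGF hz n

theorem norm_complexMGF_sub_one_le [IsProbabilityMeasure P] (hX : AEMeasurable X P)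
    (hint : Integrable (fun ω ↦ Real.exp (α * |X ω|)) P)
    (hG : ∫ ω, Real.exp (α * |X ω|) ∂P ≤ 2) (hmean : ∫ ω, X ω ∂P = 0) (hα : 0 < α)
    (hα2 : α ^ 2 ≤ 2) {z : ℂ} (hz : ‖z‖ ≤ α ^ 3 / 16) :
    ‖complexMGF X P z - 1‖ ≤ 1 / 36 := by
  have hz8 : ‖z‖ ≤ α / 8 := hz.trans (by nlinarith)
  have h0 := zero_mem_interior_integrableExpSet hX hint hα
  have h := norm_iteratedDeriv_complexMGF_sub_taylor_le hX hint 0 2 hz8 (by linarith)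
  rw [show α - α / 8 = 7 / 8 * α by ring] at h
  calc _ ≤ ‖z‖ ^ 2 * (2 / (Real.exp 1 * (7 / 8 * α))) ^ 2 * ∫ ω, Real.exp (α * |X ω|) ∂P := by
        simpa [Finset.sum_range_succ, iteratedDeriv_complexMGF_zero _ h0, hmean] using h
    _ ≤ (α ^ 3 / 16) ^ 2 * (2 / (189 / 80 * α)) ^ 2 * 2 := by
        gcongr ?_ ^ 2 * ?_ ^ 2 * ?_
        exact div_exp_one_mul_le 2 zero_le_two hα
    _ = 200 / 35721 * (α ^ 2) ^ 2 := by field_simp; ring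
    _ ≤ 200 / 35721 * 2 ^ 2 := by gcongr
    _ ≤ 1 / 36 := by norm_num

theorem norm_deriv_complexMGF_sub_self_le (hX : AEMeasurable X P)
    (hint : Integrable (fun ω ↦ Real.exp (α * |X ω|)) P)
    (hG : ∫ ω, Real.exp (α * |X ω|) ∂P ≤ 2) (hmean : ∫ ω, X ω ∂P = 0)
    (hvar : ∫ ω, X ω ^ 2 ∂P = 1) (hα : 0 < α) (hα2 : α ^ 2 ≤ 2) {z : ℂ}
    (hz : ‖z‖ ≤ α ^ 3 / 16) :
    ‖deriv (complexMGF X P) z - z‖ ≤ 1 / 16 := by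
  have hz8 : ‖z‖ ≤ α / 8 := hz.trans (by nlinarith)
  have hα3 : α ≤ 3 / 2 := by nlinarith
  have h0 := zero_mem_interior_integrableExpSet hX hint hα
  have h := norm_iteratedDeriv_complexMGF_sub_taylor_le hX hint 1 2 hz8 (by linarith)
  rw [show α - α / 8 = 7 / 8 * α by ring] at h
  calc _ ≤ ‖z‖ ^ 2 * (3 / (Real.exp 1 * (7 / 8 * α))) ^ 3 * ∫ ω, Real.exp (α * |X ω|) ∂P := by
        simpa [Finset.sum_range_succ, iteratedDeriv_complexMGF_zero _ h0, hmean, hvar] using h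
    _ ≤ (α ^ 3 / 16) ^ 2 * (3 / (189 / 80 * α)) ^ 3 * 2 := by
        gcongr ?_ ^ 2 * ?_ ^ 3 * ?_
        exact div_exp_one_mul_le 3 zero_le_three hα
    _ = 2 * 240 ^ 3 / (256 * 189 ^ 3) * α ^ 3 := by field_simp; ring
    _ ≤ 2 * 240 ^ 3 / (256 * 189 ^ 3) * (3 / 2) ^ 3 := by gcongr
    _ ≤ 1 / 16 := by norm_num

theorem norm_iteratedDeriv_two_complexMGF_sub_one_le (hX : AEMeasurable X P)
    (hint : Integrable (fun ω ↦ Real.exp (α * |X ω|)) P)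
    (hG : ∫ ω, Real.exp (α * |X ω|) ∂P ≤ 2) (hvar : ∫ ω, X ω ^ 2 ∂P = 1) (hα : 0 < α)
    (hα2 : α ^ 2 ≤ 2) {z : ℂ} (hz : ‖z‖ ≤ α ^ 3 / 16) :
    ‖iteratedDeriv 2 (complexMGF X P) z - 1‖ ≤ 3 / 10 := by
  have hz8 : ‖z‖ ≤ α / 8 := hz.trans (by nlinarith)
  have h0 := zero_mem_interior_integrableExpSet hX hint hα
  have h := norm_iteratedDeriv_complexMGF_sub_taylor_le hX hint 2 1 hz8 (by linarith)
  rw [show α - α / 8 = 7 / 8 * α by ring] at h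
  calc _ ≤ ‖z‖ * (3 / (Real.exp 1 * (7 / 8 * α))) ^ 3 * ∫ ω, Real.exp (α * |X ω|) ∂P := by
        simpa [iteratedDeriv_complexMGF_zero _ h0, hvar] using h
    _ ≤ (α ^ 3 / 16) * (3 / (189 / 80 * α)) ^ 3 * 2 := by
        gcongr ?_ * ?_ ^ 3 * ?_
        exact div_exp_one_mul_le 3 zero_le_three hα
    _ = 2 * 240 ^ 3 / (16 * 189 ^ 3) := by field_simp; ring
    _ ≤ 3 / 10 := by norm_num

theorem logDeriv_complexMGF_zero (hX : AEMeasurable X P)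
    (hint : Integrable (fun ω ↦ Real.exp (α * |X ω|)) P) (hmean : ∫ ω, X ω ∂P = 0)
    (hα : 0 < α) : logDeriv (complexMGF X P) 0 = 0 := by
  rw [logDeriv_apply, ← iteratedDeriv_one,
    iteratedDeriv_complexMGF_zero 1 (zero_mem_interior_integrableExpSet hX hint hα)]
  simp [hmean]

theorem hasDerivAt_log_complexMGF [IsProbabilityMeasure P] (hX : AEMeasurable X P)
    (hint : Integrable (fun ω ↦ Real.exp (α * |X ω|)) P)
    (hG : ∫ ω, Real.exp (α * |X ω|) ∂P ≤ 2) (hmean : ∫ ω, X ω ∂P = 0) (hα : 0 < α)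
    (hα2 : α ^ 2 ≤ 2) {z : ℂ} (hz : ‖z‖ ≤ α ^ 3 / 16) :
    HasDerivAt (fun w ↦ Complex.log (complexMGF X P w)) (logDeriv (complexMGF X P) z) z := by
  have hz' := re_mem_interior_integrableExpSet hX hint (z := z) (hz.trans_lt (by nlinarith))
  have hslit : complexMGF X P z ∈ Complex.slitPlane := by
    simpa using Complex.mem_slitPlane_of_norm_lt_one (z := complexMGF X P z - 1)
      ((norm_complexMGF_sub_one_le hX hint hG hmean hα hα2 hz).trans_lt (by norm_num))
  exact (analyticAt_complexMGF hz').differentiableAt.hasDerivAt.clog hslit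

theorem norm_sub_le_two_mul_norm_logDeriv_complexMGF_sub [IsProbabilityMeasure P]
    (hX : AEMeasurable X P) (hint : Integrable (fun ω ↦ Real.exp (α * |X ω|)) P)
    (hG : ∫ ω, Real.exp (α * |X ω|) ∂P ≤ 2) (hmean : ∫ ω, X ω ∂P = 0)
    (hvar : ∫ ω, X ω ^ 2 ∂P = 1) (hα : 0 < α) (hα2 : α ^ 2 ≤ 2) {z₁ z₂ : ℂ}
    (h₁ : ‖z₁‖ ≤ α ^ 3 / 16) (h₂ : ‖z₂‖ ≤ α ^ 3 / 16) :
    ‖z₂ - z₁‖ / 2 ≤ ‖logDeriv (complexMGF X P) z₂ - logDeriv (complexMGF X P) z₁‖ := by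
  set M := complexMGF X P
  set D := Metric.closedBall (0 : ℂ) (α ^ 3 / 16)
  have hderiv : ∀ z ∈ D, HasDerivWithinAt (logDeriv M)
      ((iteratedDeriv 2 M z * M z - deriv M z ^ 2) / M z ^ 2) D z := by
    intro z hz
    rw [mem_closedBall_zero_iff] at hz
    have hz' := re_mem_interior_integrableExpSet hX hint (z := z) (hz.trans_lt (by nlinarith))
    have hM := (analyticAt_complexMGF hz').differentiableAt.hasDerivAt
    have hM' : HasDerivAt (deriv M) (iteratedDeriv 2 M z) z := by
      simpa [iteratedDeriv_one] using hasDerivAt_iteratedDeriv_complexMGF_succ hz' 1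
    have hM0 : M z ≠ 0 := fun h ↦ by
      have := norm_complexMGF_sub_one_le hX hint hG hmean hα hα2 hz
      rw [show complexMGF X P z = 0 from h] at this
      norm_num at this
    exact ((hM'.div hM hM0).congr_deriv (by ring)).hasDerivWithinAt
  have hbound : ∀ z ∈ D, ‖(iteratedDeriv 2 M z * M z - deriv M z ^ 2) / M z ^ 2 - 1‖ ≤ 1 / 2 := by
    intro z hz
    rw [mem_closedBall_zero_iff] at hz
    exact Complex.norm_mul_div_sq_sub_one_le
      (norm_complexMGF_sub_one_le hX hint hG hmean hα hα2 hz)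
      (norm_deriv_complexMGF_sub_self_le hX hint hG hmean hvar hα hα2 hz)
      (norm_iteratedDeriv_two_complexMGF_sub_one_le hX hint hG hvar hα hα2 hz)
      (hz.trans (by nlinarith))
  have h := (convex_closedBall (0 : ℂ) _).mul_norm_sub_le_norm_image_sub hderiv hbound
    (mem_closedBall_zero_iff.2 h₁) (mem_closedBall_zero_iff.2 h₂)
  linarith

end

/-- If `E X = 0`, `E X² = 1`, `E e^{α|X|} ≤ 2`, and `K(z) = log E e^{zX}`, then the map
`z ↦ K'(z)` satisfies `|K'(z₂) − K'(z₁)| ≥ |z₂ − z₁|/2` on the disc `|z| ≤ α³/16`,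
and in particular `|K'(z)| ≥ |z|/2` there. -/
theorem stmt_14 {Ω : Type*} [MeasurableSpace Ω] {P : Measure Ω} [IsProbabilityMeasure P]
    (X : Ω → ℝ) (hmeas : Measurable X) (α : ℝ) (hα : 0 < α)
    (hmean : ∫ ω, X ω ∂P = 0) (hvar : ∫ ω, (X ω) ^ 2 ∂P = 1)
    (hexp : ∫⁻ ω, ENNReal.ofReal (Real.exp (α * |X ω|)) ∂P ≤ 2)
    (K : ℂ → ℂ)
    (hK : ∀ z : ℂ, K z = Complex.log (∫ ω, Complex.exp (z * X ω) ∂P)) :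
    (∀ z₁ z₂ : ℂ, ‖z₁‖ ≤ α ^ 3 / 16 → ‖z₂‖ ≤ α ^ 3 / 16 →
      ‖z₂ - z₁‖ / 2 ≤ ‖deriv K z₂ - deriv K z₁‖) ∧
    (∀ z : ℂ, ‖z‖ ≤ α ^ 3 / 16 → ‖z‖ / 2 ≤ ‖deriv K z‖) := by
  have hX := hmeas.aemeasurable (μ := P)
  have hint := integrable_exp_mul_abs_of_lintegral_le hmeas ENNReal.ofNat_ne_top hexp
  have hG : ∫ ω, Real.exp (α * |X ω|) ∂P ≤ 2 := by
    simpa using integral_exp_mul_abs_le_of_lintegral_le hmeas ENNReal.ofNat_ne_top hexp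
  have hα2 : α ^ 2 ≤ 2 := by
    have := sq_mul_integral_sq_le hint hα.le
    rw [hvar] at this
    linarith
  have hK' : ∀ z, ‖z‖ ≤ α ^ 3 / 16 → deriv K z = logDeriv (complexMGF X P) z := fun z hz ↦ by
    rw [funext hK]
    exact (hasDerivAt_log_complexMGF hX hint hG hmean hα hα2 hz).deriv
  have hlip := fun {z₁ z₂ : ℂ} ↦ norm_sub_le_two_mul_norm_logDeriv_complexMGF_sub
    (z₁ := z₁) (z₂ := z₂) hX hint hG hmean hvar hα hα2
  refine ⟨fun z₁ z₂ h₁ h₂ ↦ ?_, fun z hz ↦ ?_⟩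
  · rw [hK' z₁ h₁, hK' z₂ h₂]
    exact hlip h₁ h₂
  · have h0 : ‖(0 : ℂ)‖ ≤ α ^ 3 / 16 := by rw [norm_zero]; positivity
    simpa [hK' z hz, hK' 0 h0, logDeriv_complexMGF_zero hX hint hmean hα] using hlip h0 hz
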